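/- Fix Λ ≥ 0. For x ∈ [1/2, 1] and θ ∈ (0, π/3), set A(x,θ) := (x·tan θ)/2, P(x,θ) := 1 + x/cos θ + √((x−1)² + x² tan² θ), and B̃₁(x,θ) := Λ·A(x,θ) − (π²/16)·P(x,θ)²/A(x,θ) − 7√3π²/12. Then B̃₁ is monotone non-decreasing in each variable on the region where x² + x² tan² θ ≤ 1: if 1/2 ≤ x ≤ x′ ≤ 1, 0 < θ ≤ θ′ < π/3 and x′² + x′² tan² θ′ ≤ 1, then B̃₁(x,θ) ≤ B̃₁(x′,θ′). -/

import Mathlib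

set_option maxHeartbeats 1000000

/-- Area of the triangle with vertices `(0,0)`, `(1,0)`, `(x, x tan θ)`. -/
noncomputable def Atri (x θ : ℝ) : ℝ := x * Real.tan θ / 2

/-- Perimeter of the triangle with vertices `(0,0)`, `(1,0)`, `(x, x tan θ)`. -/
noncomputable def Ptri (x θ : ℝ) : ℝ :=
  1 + x / Real.cos θ + Real.sqrt ((x - 1) ^ 2 + x ^ 2 * Real.tan θ ^ 2)

/-- The auxiliary functional `B̃₁` in the parameters `(x, θ)`. -/
noncomputable def B1t (Λ x θ : ℝ) : ℝ :=
  Λ * Atri x θ - Real.pi ^ 2 / 16 * (Ptri x θ) ^ 2 / Atri x θ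
    - 7 * Real.sqrt 3 * Real.pi ^ 2 / 12

/-- `B̃₁` written in terms of `t = tan θ`. -/
noncomputable def gfun (Λ x t : ℝ) : ℝ :=
  Λ * (x * t / 2) - Real.pi ^ 2 / 16 *
    (1 + x * Real.sqrt (1 + t ^ 2) + Real.sqrt ((x - 1) ^ 2 + x ^ 2 * t ^ 2)) ^ 2 / (x * t / 2)
    - 7 * Real.sqrt 3 * Real.pi ^ 2 / 12

lemma keyx (x t s c : ℝ) (hx : 1/2 ≤ x) (ht : 0 < t)
    (hs : s^2 = 1 + t^2) (hs0 : 0 < s)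
    (hc : c^2 = (x-1)^2 + x^2*t^2) (hc0 : 0 < c)
    (hdisk : x^2*s^2 ≤ 1) :
    2*x*(s + (2*(x-1) + 2*x*t^2)/(2*c)) ≤ 1 + x*s + c := by
  have hx0 : 0 < x := by linarith
  have hxs : x*s ≤ 1 := by nlinarith [mul_pos hx0 hs0]
  have hd : (2*(x-1) + 2*x*t^2)/(2*c) * c = (x-1) + x*t^2 := by
    field_simp
  have key : (2*x*(s + (2*(x-1) + 2*x*t^2)/(2*c))) * c ≤ (1 + x*s + c) * c := by
    have h1 : 0 ≤ (1 - x*s) * c := mul_nonneg (by linarith) hc0.le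
    nlinarith [hd, hc, hs, h1]
  exact le_of_mul_le_mul_right key hc0

lemma keyt (x t s c : ℝ) (hx : 1/2 ≤ x) (hx1 : x ≤ 1) (ht : 0 < t)
    (hs : s^2 = 1 + t^2) (hs0 : 0 < s)
    (hc : c^2 = (x-1)^2 + x^2*t^2) (hc0 : 0 < c)
    (hdisk : x^2*s^2 ≤ 1) :
    2*t*(x*(2*t/(2*s)) + 2*x^2*t/(2*c)) ≤ 1 + x*s + c := by
  have hx0 : 0 < x := by linarith
  have hxs : x*s ≤ 1 := by nlinarith [mul_pos hx0 hs0]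
  have hts : t < s := by nlinarith
  have hxt1 : x*t ≤ 1 := by nlinarith [mul_pos hx0 ht]
  have hxtc : x*t ≤ c := by nlinarith [mul_pos hx0 ht, sq_nonneg (x-1)]
  have hG : 2*x*t^2*c + 2*x^2*t^2*s ≤ (1 + x*s + c)*(s*c) := by
    have expand : (1 + x*s + c)*(s*c) = s*c + x*(1+t^2)*c + ((x-1)^2 + x^2*t^2)*s := by
      rw [← hs, ← hc]; ring
    rw [expand]
    rcases le_or_gt t 1 with h1 | h1
    · have h_a : 0 ≤ s*(c - x*t) := mul_nonneg hs0.le (by linarith)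
      have h_b : 0 ≤ x*(1-t^2)*c := mul_nonneg (mul_nonneg hx0.le (by nlinarith)) hc0.le
      have h_c : 0 ≤ s*(x-1)^2 := mul_nonneg hs0.le (sq_nonneg _)
      have h_d : 0 ≤ s*(x*t - x^2*t^2) := mul_nonneg hs0.le (by nlinarith [mul_pos hx0 ht])
      nlinarith [h_a, h_b, h_c, h_d]
    · have ht1 : 1 ≤ t := h1.le
      have f1 : x*(t^2-1)*s ≤ t^2 - 1 := by
        linarith [mul_nonneg (by nlinarith : (0:ℝ) ≤ t^2-1) (by linarith : (0:ℝ) ≤ 1 - x*s)]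
      have f2 : s ≤ 2 := by nlinarith
      have h4 : s^2 ≤ 4*c^2 := by
        have hfac : 4*c^2 - s^2 = (2*x-1)*(2*(1+t^2)*x - (3-t^2)) := by rw [hc, hs]; ring
        have h5 : 0 ≤ 2*(1+t^2)*x - (3-t^2) := by
          nlinarith [mul_nonneg (by linarith : (0:ℝ) ≤ 2*x-1) (sq_nonneg t)]
        nlinarith [mul_nonneg (by linarith : (0:ℝ) ≤ 2*x-1) h5]
      have f3 : s ≤ 2*c := by
        have h6 : 0 < s + 2*c := by linarith
        nlinarith [h4, h6]
      have f4 : s - 1 ≤ c := by linarith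
      have hst : s ≤ 1 + t := by nlinarith
      rcases le_or_gt (x*t) (1-x) with h2 | h2
      · have hE : 0 ≤ s - x*(t^2-1) := by nlinarith [f1, hs0]
        have hF : 0 ≤ (1-x)^2 - x^2*t^2 := by nlinarith [mul_pos hx0 ht]
        nlinarith [mul_nonneg hc0.le hE, mul_nonneg hs0.le hF]
      · have f5 : (x*t + x - 1)*s ≤ 1 + t - s := by
          nlinarith [mul_nonneg (by linarith : (0:ℝ) ≤ 1+t) (by linarith : (0:ℝ) ≤ 1 - x*s)]
        have f6 : (x*t + 1 - x)*s ≤ s + t - 1 := by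
          nlinarith [mul_nonneg (by linarith : (0:ℝ) ≤ t-1) (by linarith : (0:ℝ) ≤ 1 - x*s)]
        have hnn1 : (0:ℝ) ≤ (x*t + 1 - x)*s := mul_nonneg (by nlinarith [mul_pos hx0 ht]) hs0.le
        have hnn2 : (0:ℝ) ≤ 1 + t - s := by linarith
        have f7 : (x^2*t^2 - (1-x)^2)*s^2 ≤ 2*s - 2 := by
          have hmm := mul_le_mul f5 f6 hnn1 hnn2
          nlinarith [hmm, hs]
        have f8 : 2*c ≤ c*(s - x*(t^2-1))*s := by
          have h7 := mul_le_mul_of_nonneg_left f1 hc0.le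
          have hcs2 : c*s^2 = c*(1+t^2) := by rw [hs]
          nlinarith [h7, hcs2]
        have f9 : s*(x^2*t^2 - (1-x)^2)*s ≤ 2*c := by nlinarith [f7, f4]
        have f10 : s*(x^2*t^2 - (1-x)^2) ≤ c*(s - x*(t^2-1)) := by
          have h8 : (s*(x^2*t^2 - (1-x)^2))*s ≤ (c*(s - x*(t^2-1)))*s := by
            nlinarith [le_trans f9 f8]
          exact le_of_mul_le_mul_right h8 hs0
        nlinarith [f10]
  have hsc : 0 < s*c := mul_pos hs0 hc0
  have heq : 2*t*(x*(2*t/(2*s)) + 2*x^2*t/(2*c)) = (2*x*t^2*c + 2*x^2*t^2*s)/(s*c) := by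
    field_simp
  rw [heq, div_le_iff₀ hsc]
  linarith [hG]

lemma hasDeriv_x (Λ t : ℝ) (ht : 0 < t) (y : ℝ) (hy : 0 < y) :
    HasDerivAt (fun z => gfun Λ z t)
      (Λ * (t / 2) + Real.pi ^ 2 / 16 *
        (((1 + y * Real.sqrt (1 + t ^ 2) + Real.sqrt ((y - 1) ^ 2 + y ^ 2 * t ^ 2)) ^ 2 * (t / 2)
          - 2 * (1 + y * Real.sqrt (1 + t ^ 2) + Real.sqrt ((y - 1) ^ 2 + y ^ 2 * t ^ 2)) *
            (Real.sqrt (1 + t ^ 2) +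
              (2 * (y - 1) + 2 * y * t ^ 2) / (2 * Real.sqrt ((y - 1) ^ 2 + y ^ 2 * t ^ 2))) *
            (y * t / 2)) / (y * t / 2) ^ 2)) y := by
  set s := Real.sqrt (1 + t ^ 2) with hs
  have hqpos : 0 < (y - 1) ^ 2 + y ^ 2 * t ^ 2 := by
    have : 0 < y ^ 2 * t ^ 2 := by positivity
    nlinarith [sq_nonneg (y - 1)]
  have hq : HasDerivAt (fun z : ℝ => (z - 1) ^ 2 + z ^ 2 * t ^ 2)
      (2 * (y - 1) + 2 * y * t ^ 2) y := by
    have h1 : HasDerivAt (fun z : ℝ => (z - 1) ^ 2) (2 * (y - 1)) y := by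
      have := ((hasDerivAt_id y).sub_const 1).pow 2
      refine this.congr_deriv ?_
      simp only [id_eq]; push_cast; ring
    have h2 : HasDerivAt (fun z : ℝ => z ^ 2 * t ^ 2) (2 * y * t ^ 2) y := by
      have := (hasDerivAt_pow 2 y).mul_const (t ^ 2)
      refine this.congr_deriv ?_
      push_cast; ring
    exact h1.add h2
  have hc' : HasDerivAt (fun z : ℝ => Real.sqrt ((z - 1) ^ 2 + z ^ 2 * t ^ 2))
      ((2 * (y - 1) + 2 * y * t ^ 2) / (2 * Real.sqrt ((y - 1) ^ 2 + y ^ 2 * t ^ 2))) y := by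
    have h := (Real.hasDerivAt_sqrt (ne_of_gt hqpos)).comp y hq
    refine h.congr_deriv ?_
    field_simp
  have hN : HasDerivAt (fun z : ℝ => 1 + z * s + Real.sqrt ((z - 1) ^ 2 + z ^ 2 * t ^ 2))
      (s + (2 * (y - 1) + 2 * y * t ^ 2) / (2 * Real.sqrt ((y - 1) ^ 2 + y ^ 2 * t ^ 2))) y := by
    have h1 : HasDerivAt (fun z : ℝ => 1 + z * s) s y := by
      simpa using ((hasDerivAt_id y).mul_const s).const_add 1
    exact h1.add hc'
  have hA : HasDerivAt (fun z : ℝ => z * t / 2) (t / 2) y := by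
    simpa using ((hasDerivAt_id y).mul_const t).div_const 2
  have hA0 : y * t / 2 ≠ 0 := by positivity
  have hL : HasDerivAt (fun z : ℝ => Λ * (z * t / 2)) (Λ * (t / 2)) y := hA.const_mul Λ
  have hNum : HasDerivAt (fun z : ℝ =>
      Real.pi ^ 2 / 16 * (1 + z * s + Real.sqrt ((z - 1) ^ 2 + z ^ 2 * t ^ 2)) ^ 2)
      (Real.pi ^ 2 / 16 * ((2 : ℕ) *
        (1 + y * s + Real.sqrt ((y - 1) ^ 2 + y ^ 2 * t ^ 2)) ^ 1 *
        (s + (2 * (y - 1) + 2 * y * t ^ 2) / (2 * Real.sqrt ((y - 1) ^ 2 + y ^ 2 * t ^ 2))))) y :=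
    (hN.pow 2).const_mul _
  have hdiv := hNum.div hA hA0
  have hfull := (hL.sub hdiv).sub_const (7 * Real.sqrt 3 * Real.pi ^ 2 / 12)
  have hval : Λ * (t / 2) + Real.pi ^ 2 / 16 *
        (((1 + y * s + Real.sqrt ((y - 1) ^ 2 + y ^ 2 * t ^ 2)) ^ 2 * (t / 2)
          - 2 * (1 + y * s + Real.sqrt ((y - 1) ^ 2 + y ^ 2 * t ^ 2)) *
            (s + (2 * (y - 1) + 2 * y * t ^ 2) / (2 * Real.sqrt ((y - 1) ^ 2 + y ^ 2 * t ^ 2))) *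
            (y * t / 2)) / (y * t / 2) ^ 2)
      = Λ * (t / 2) -
        (Real.pi ^ 2 / 16 * ((2 : ℕ) *
          (1 + y * s + Real.sqrt ((y - 1) ^ 2 + y ^ 2 * t ^ 2)) ^ 1 *
          (s + (2 * (y - 1) + 2 * y * t ^ 2) / (2 * Real.sqrt ((y - 1) ^ 2 + y ^ 2 * t ^ 2)))) *
          (y * t / 2) -
          Real.pi ^ 2 / 16 * (1 + y * s + Real.sqrt ((y - 1) ^ 2 + y ^ 2 * t ^ 2)) ^ 2 * (t / 2)) /
          (y * t / 2) ^ 2 := by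
    push_cast; ring
  rw [show (fun z => gfun Λ z t) = (fun z : ℝ => Λ * (z * t / 2) -
      Real.pi ^ 2 / 16 * (1 + z * s + Real.sqrt ((z - 1) ^ 2 + z ^ 2 * t ^ 2)) ^ 2 / (z * t / 2)
      - 7 * Real.sqrt 3 * Real.pi ^ 2 / 12) from rfl, hval]
  exact hfull

lemma hasDeriv_t (Λ x : ℝ) (hx : 0 < x) (y : ℝ) (hy : 0 < y) :
    HasDerivAt (fun u => gfun Λ x u)
      (Λ * (x / 2) + Real.pi ^ 2 / 16 *
        (((1 + x * Real.sqrt (1 + y ^ 2) + Real.sqrt ((x - 1) ^ 2 + x ^ 2 * y ^ 2)) ^ 2 * (x / 2)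
          - 2 * (1 + x * Real.sqrt (1 + y ^ 2) + Real.sqrt ((x - 1) ^ 2 + x ^ 2 * y ^ 2)) *
            (x * (2 * y / (2 * Real.sqrt (1 + y ^ 2))) +
              2 * x ^ 2 * y / (2 * Real.sqrt ((x - 1) ^ 2 + x ^ 2 * y ^ 2))) *
            (x * y / 2)) / (x * y / 2) ^ 2)) y := by
  have hrpos : (0:ℝ) < 1 + y ^ 2 := by positivity
  have hqpos : 0 < (x - 1) ^ 2 + x ^ 2 * y ^ 2 := by
    have : 0 < x ^ 2 * y ^ 2 := by positivity
    nlinarith [sq_nonneg (x - 1)]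
  have hr : HasDerivAt (fun u : ℝ => 1 + u ^ 2) (2 * y) y := by
    have := (hasDerivAt_pow 2 y).const_add 1
    refine this.congr_deriv ?_
    push_cast; ring
  have hs' : HasDerivAt (fun u : ℝ => Real.sqrt (1 + u ^ 2))
      (2 * y / (2 * Real.sqrt (1 + y ^ 2))) y := by
    have h := (Real.hasDerivAt_sqrt (ne_of_gt hrpos)).comp y hr
    refine h.congr_deriv ?_
    field_simp
  have hq : HasDerivAt (fun u : ℝ => (x - 1) ^ 2 + x ^ 2 * u ^ 2) (2 * x ^ 2 * y) y := by
    have := ((hasDerivAt_pow 2 y).const_mul (x ^ 2)).const_add ((x - 1) ^ 2)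
    refine this.congr_deriv ?_
    push_cast; ring
  have hc' : HasDerivAt (fun u : ℝ => Real.sqrt ((x - 1) ^ 2 + x ^ 2 * u ^ 2))
      (2 * x ^ 2 * y / (2 * Real.sqrt ((x - 1) ^ 2 + x ^ 2 * y ^ 2))) y := by
    have h := (Real.hasDerivAt_sqrt (ne_of_gt hqpos)).comp y hq
    refine h.congr_deriv ?_
    field_simp
  have hN : HasDerivAt (fun u : ℝ =>
      1 + x * Real.sqrt (1 + u ^ 2) + Real.sqrt ((x - 1) ^ 2 + x ^ 2 * u ^ 2))
      (x * (2 * y / (2 * Real.sqrt (1 + y ^ 2))) +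
        2 * x ^ 2 * y / (2 * Real.sqrt ((x - 1) ^ 2 + x ^ 2 * y ^ 2))) y :=
    ((hs'.const_mul x).const_add 1).add hc'
  have hA : HasDerivAt (fun u : ℝ => x * u / 2) (x / 2) y := by
    simpa using ((hasDerivAt_id y).const_mul x).div_const 2
  have hA0 : x * y / 2 ≠ 0 := by positivity
  have hL : HasDerivAt (fun u : ℝ => Λ * (x * u / 2)) (Λ * (x / 2)) y := hA.const_mul Λ
  have hNum := ((hN.pow 2).const_mul (Real.pi ^ 2 / 16)).div hA hA0
  have hfull := (hL.sub hNum).sub_const (7 * Real.sqrt 3 * Real.pi ^ 2 / 12)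
  have hval : Λ * (x / 2) + Real.pi ^ 2 / 16 *
        (((1 + x * Real.sqrt (1 + y ^ 2) + Real.sqrt ((x - 1) ^ 2 + x ^ 2 * y ^ 2)) ^ 2 * (x / 2)
          - 2 * (1 + x * Real.sqrt (1 + y ^ 2) + Real.sqrt ((x - 1) ^ 2 + x ^ 2 * y ^ 2)) *
            (x * (2 * y / (2 * Real.sqrt (1 + y ^ 2))) +
              2 * x ^ 2 * y / (2 * Real.sqrt ((x - 1) ^ 2 + x ^ 2 * y ^ 2))) *
            (x * y / 2)) / (x * y / 2) ^ 2)
      = Λ * (x / 2) -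
        (Real.pi ^ 2 / 16 * ((2 : ℕ) *
          (1 + x * Real.sqrt (1 + y ^ 2) + Real.sqrt ((x - 1) ^ 2 + x ^ 2 * y ^ 2)) ^ 1 *
          (x * (2 * y / (2 * Real.sqrt (1 + y ^ 2))) +
            2 * x ^ 2 * y / (2 * Real.sqrt ((x - 1) ^ 2 + x ^ 2 * y ^ 2)))) * (x * y / 2) -
          Real.pi ^ 2 / 16 *
            (1 + x * Real.sqrt (1 + y ^ 2) + Real.sqrt ((x - 1) ^ 2 + x ^ 2 * y ^ 2)) ^ 2 *
            (x / 2)) / (x * y / 2) ^ 2 := by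
    push_cast; ring
  rw [show (fun u => gfun Λ x u) = (fun u : ℝ => Λ * (x * u / 2) -
      Real.pi ^ 2 / 16 *
        (1 + x * Real.sqrt (1 + u ^ 2) + Real.sqrt ((x - 1) ^ 2 + x ^ 2 * u ^ 2)) ^ 2 / (x * u / 2)
      - 7 * Real.sqrt 3 * Real.pi ^ 2 / 12) from rfl, hval]
  exact hfull

lemma mono_x (Λ t a b : ℝ) (hΛ : 0 ≤ Λ) (ht : 0 < t) (ha : 1/2 ≤ a) (hab : a ≤ b)
    (hb : b^2*(1+t^2) ≤ 1) : gfun Λ a t ≤ gfun Λ b t := by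
  have key : MonotoneOn (fun z => gfun Λ z t) (Set.Icc a b) := by
    apply monotoneOn_of_deriv_nonneg (convex_Icc a b)
    · intro z hz
      have hz0 : 0 < z := lt_of_lt_of_le (by linarith) hz.1
      exact (hasDeriv_x Λ t ht z hz0).continuousAt.continuousWithinAt
    · intro z hz
      rw [interior_Icc] at hz
      have hz0 : 0 < z := lt_of_le_of_lt (by linarith : (0:ℝ) ≤ a) hz.1
      exact (hasDeriv_x Λ t ht z hz0).differentiableAt.differentiableWithinAt
    · intro z hz
      rw [interior_Icc] at hz
      have hza : a < z := hz.1
      have hzb : z < b := hz.2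
      have hz0 : 0 < z := by linarith
      rw [(hasDeriv_x Λ t ht z hz0).deriv]
      set s := Real.sqrt (1 + t ^ 2) with hsdef
      set c := Real.sqrt ((z - 1) ^ 2 + z ^ 2 * t ^ 2) with hcdef
      have hs2 : s^2 = 1 + t^2 := Real.sq_sqrt (by positivity)
      have hs0 : 0 < s := Real.sqrt_pos.2 (by positivity)
      have hqpos : 0 < (z - 1) ^ 2 + z ^ 2 * t ^ 2 := by
        have : 0 < z ^ 2 * t ^ 2 := by positivity
        nlinarith [sq_nonneg (z - 1)]
      have hc2 : c^2 = (z-1)^2 + z^2*t^2 := Real.sq_sqrt hqpos.le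
      have hc0 : 0 < c := Real.sqrt_pos.2 hqpos
      have hdisk : z^2*s^2 ≤ 1 := by
        rw [hs2]
        have h1 : z^2 ≤ b^2 := by nlinarith
        nlinarith [sq_nonneg t]
      have hkey := keyx z t s c (by linarith) ht hs2 hs0 hc2 hc0 hdisk
      have hN0 : 0 < 1 + z * s + c := by nlinarith [mul_pos hz0 hs0]
      have hnum : 0 ≤ (1 + z * s + c) ^ 2 * (t / 2)
          - 2 * (1 + z * s + c) * (s + (2 * (z - 1) + 2 * z * t ^ 2) / (2 * c)) * (z * t / 2) := by
        have h1 : 0 ≤ (1 + z * s + c) *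
            ((1 + z * s + c) - 2 * z * (s + (2 * (z - 1) + 2 * z * t ^ 2) / (2 * c))) :=
          mul_nonneg hN0.le (by linarith)
        have h2 : (1 + z * s + c) ^ 2 * (t / 2)
            - 2 * (1 + z * s + c) * (s + (2 * (z - 1) + 2 * z * t ^ 2) / (2 * c)) * (z * t / 2)
            = (t / 2) * ((1 + z * s + c) *
              ((1 + z * s + c) - 2 * z * (s + (2 * (z - 1) + 2 * z * t ^ 2) / (2 * c)))) := by
          ring
        rw [h2]
        exact mul_nonneg (by linarith) h1
      have hΛt : 0 ≤ Λ * (t / 2) := mul_nonneg hΛ (by linarith)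
      have hfrac : 0 ≤ Real.pi ^ 2 / 16 *
          (((1 + z * s + c) ^ 2 * (t / 2)
            - 2 * (1 + z * s + c) * (s + (2 * (z - 1) + 2 * z * t ^ 2) / (2 * c)) * (z * t / 2))
            / (z * t / 2) ^ 2) :=
        mul_nonneg (by positivity) (div_nonneg hnum (sq_nonneg _))
      linarith
  exact key (Set.left_mem_Icc.2 hab) (Set.right_mem_Icc.2 hab) hab

lemma mono_t (Λ x a b : ℝ) (hΛ : 0 ≤ Λ) (hx : 1/2 ≤ x) (hx1 : x ≤ 1) (ha : 0 < a)
    (hab : a ≤ b) (hb : x^2*(1+b^2) ≤ 1) : gfun Λ x a ≤ gfun Λ x b := by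
  have hx0 : 0 < x := by linarith
  have key : MonotoneOn (fun u => gfun Λ x u) (Set.Icc a b) := by
    apply monotoneOn_of_deriv_nonneg (convex_Icc a b)
    · intro z hz
      have hz0 : 0 < z := lt_of_lt_of_le ha hz.1
      exact (hasDeriv_t Λ x hx0 z hz0).continuousAt.continuousWithinAt
    · intro z hz
      rw [interior_Icc] at hz
      have hz0 : 0 < z := lt_trans ha hz.1
      exact (hasDeriv_t Λ x hx0 z hz0).differentiableAt.differentiableWithinAt
    · intro z hz
      rw [interior_Icc] at hz
      have hz0 : 0 < z := lt_trans ha hz.1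
      have hzb : z < b := hz.2
      rw [(hasDeriv_t Λ x hx0 z hz0).deriv]
      set s := Real.sqrt (1 + z ^ 2) with hsdef
      set c := Real.sqrt ((x - 1) ^ 2 + x ^ 2 * z ^ 2) with hcdef
      have hs2 : s^2 = 1 + z^2 := Real.sq_sqrt (by positivity)
      have hs0 : 0 < s := Real.sqrt_pos.2 (by positivity)
      have hqpos : 0 < (x - 1) ^ 2 + x ^ 2 * z ^ 2 := by
        have : 0 < x ^ 2 * z ^ 2 := by positivity
        nlinarith [sq_nonneg (x - 1)]
      have hc2 : c^2 = (x-1)^2 + x^2*z^2 := Real.sq_sqrt hqpos.le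
      have hc0 : 0 < c := Real.sqrt_pos.2 hqpos
      have hdisk : x^2*s^2 ≤ 1 := by
        rw [hs2]
        have h1 : z^2 ≤ b^2 := by nlinarith
        nlinarith [sq_nonneg x]
      have hkey := keyt x z s c hx hx1 hz0 hs2 hs0 hc2 hc0 hdisk
      have hN0 : 0 < 1 + x * s + c := by nlinarith [mul_pos hx0 hs0]
      have hnum : 0 ≤ (1 + x * s + c) ^ 2 * (x / 2)
          - 2 * (1 + x * s + c) *
            (x * (2 * z / (2 * s)) + 2 * x ^ 2 * z / (2 * c)) * (x * z / 2) := by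
        have h1 : 0 ≤ (1 + x * s + c) *
            ((1 + x * s + c) - 2 * z * (x * (2 * z / (2 * s)) + 2 * x ^ 2 * z / (2 * c))) :=
          mul_nonneg hN0.le (by linarith)
        have h2 : (1 + x * s + c) ^ 2 * (x / 2)
            - 2 * (1 + x * s + c) *
              (x * (2 * z / (2 * s)) + 2 * x ^ 2 * z / (2 * c)) * (x * z / 2)
            = (x / 2) * ((1 + x * s + c) *
              ((1 + x * s + c) - 2 * z * (x * (2 * z / (2 * s)) + 2 * x ^ 2 * z / (2 * c)))) := by
          ring
        rw [h2]
        exact mul_nonneg (by linarith) h1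
      have hΛx : 0 ≤ Λ * (x / 2) := mul_nonneg hΛ (by linarith)
      have hfrac : 0 ≤ Real.pi ^ 2 / 16 *
          (((1 + x * s + c) ^ 2 * (x / 2)
            - 2 * (1 + x * s + c) *
              (x * (2 * z / (2 * s)) + 2 * x ^ 2 * z / (2 * c)) * (x * z / 2))
            / (x * z / 2) ^ 2) :=
        mul_nonneg (by positivity) (div_nonneg hnum (sq_nonneg _))
      linarith
  exact key (Set.left_mem_Icc.2 hab) (Set.right_mem_Icc.2 hab) hab

lemma B1t_eq_gfun (Λ x θ : ℝ) (h1 : 0 < θ) (h2 : θ < Real.pi / 2) :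
    B1t Λ x θ = gfun Λ x (Real.tan θ) := by
  have hcos : 0 < Real.cos θ :=
    Real.cos_pos_of_mem_Ioo ⟨by linarith [Real.pi_pos], h2⟩
  have hsq : Real.sqrt (1 + Real.tan θ ^ 2) = (Real.cos θ)⁻¹ := by
    rw [← Real.inv_sqrt_one_add_tan_sq hcos, inv_inv]
  simp only [B1t, gfun, Atri, Ptri, hsq, div_eq_mul_inv]

/-- For fixed `Λ ≥ 0`, `B̃₁` is monotone non-decreasing in each variable on the region
where the apex lies in the closed unit disk. -/
theorem statement14 (Λ : ℝ) (hΛ : 0 ≤ Λ) (x x' θ θ' : ℝ)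
    (hx : 1 / 2 ≤ x) (hxx : x ≤ x') (hx' : x' ≤ 1)
    (hθ : 0 < θ) (hθθ : θ ≤ θ') (hθ' : θ' < Real.pi / 3)
    (hdisk : x' ^ 2 + x' ^ 2 * Real.tan θ' ^ 2 ≤ 1) :
    B1t Λ x θ ≤ B1t Λ x' θ' := by
  have hpi : 0 < Real.pi := Real.pi_pos
  have hθ'2 : θ' < Real.pi / 2 := by linarith
  have hθ2 : θ < Real.pi / 2 := by linarith
  set t := Real.tan θ with htdef
  set t' := Real.tan θ' with ht'def
  have ht : 0 < t := Real.tan_pos_of_pos_of_lt_pi_div_two hθ hθ2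
  have htt' : t ≤ t' := by
    rcases eq_or_lt_of_le hθθ with h | h
    · rw [htdef, ht'def, h]
    · exact (Real.tan_lt_tan_of_lt_of_lt_pi_div_two (by linarith) hθ'2 h).le
  have ht' : 0 < t' := lt_of_lt_of_le ht htt'
  have hd' : x'^2*(1+t'^2) ≤ 1 := by nlinarith [hdisk]
  have hd : x'^2*(1+t^2) ≤ 1 := by nlinarith [sq_nonneg x', hd']
  have step1 : gfun Λ x t ≤ gfun Λ x' t := mono_x Λ t x x' hΛ ht hx hxx hd
  have step2 : gfun Λ x' t ≤ gfun Λ x' t' :=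
    mono_t Λ x' t t' hΛ (by linarith) hx' ht htt' hd'
  rw [B1t_eq_gfun Λ x θ hθ hθ2, B1t_eq_gfun Λ x' θ' (by linarith) hθ'2]
  exact le_trans step1 step2
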